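/- arXiv:2402.09041 — 5 statements merged into one kernel-verified Lean document; each statement's English description precedes it below -/
import Mathlib

section
/- Let X, Xᵢ, Y, Yᵢ be nonnegative random variables with distributions F, Fᵢ, G, Gᵢ, all of which have dominatedly varying tails. If F̄ᵢ(x) ≍ F̄(x) and Ḡᵢ(x) ≍ Ḡ(x) as x → ∞, then P[Xᵢ + Yᵢ > x] ≍ P[X + Y > x] as x → ∞ (where the pairs (Xᵢ, Yᵢ) and (X, Y) may each be arbitrarily dependent). -/
open Filter MeasureTheory Asymptotics ProbabilityTheory

noncomputable def rtail {Ω : Type*} [MeasureSpace Ω] (Z : Ω → ℝ) (x : ℝ) : ℝ :=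
  (ℙ {ω | x < Z ω}).toReal

def DomVar (T : ℝ → ℝ) : Prop :=
  ∀ b ∈ Set.Ioo (0:ℝ) 1, (fun x => T (b * x)) =O[atTop] T

def WeakEquiv (f g : ℝ → ℝ) : Prop := f =O[atTop] g ∧ g =O[atTop] f

section aux
variable {Ω : Type*} [MeasureSpace Ω] [IsProbabilityMeasure (ℙ : Measure Ω)]

lemma rtail_nonneg (Z : Ω → ℝ) (x : ℝ) : 0 ≤ rtail Z x := ENNReal.toReal_nonneg

lemma rtail_fin (Z : Ω → ℝ) (x : ℝ) : ℙ {ω | x < Z ω} ≠ ⊤ :=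
  (measure_lt_top _ _).ne

lemma rtail_le_sum (X Y : Ω → ℝ) (hY0 : ∀ ω, 0 ≤ Y ω) (x : ℝ) :
    rtail X x ≤ rtail (fun ω => X ω + Y ω) x := by
  refine ENNReal.toReal_mono (rtail_fin _ x) (measure_mono ?_)
  intro ω hω
  exact lt_of_lt_of_le hω (le_add_of_nonneg_right (hY0 ω))

lemma rtail_sum_le (X Y : Ω → ℝ) (x : ℝ) :
    rtail (fun ω => X ω + Y ω) x ≤ rtail X (x / 2) + rtail Y (x / 2) := by
  have hsub : {ω | x < X ω + Y ω} ⊆ {ω | x / 2 < X ω} ∪ {ω | x / 2 < Y ω} := by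
    intro ω hω
    by_contra h
    simp only [Set.mem_union, Set.mem_setOf_eq] at h
    push_neg at h
    obtain ⟨h1, h2⟩ := h
    have : X ω + Y ω ≤ x := by linarith
    exact absurd hω (not_lt.mpr this)
  calc rtail (fun ω => X ω + Y ω) x
      ≤ (ℙ ({ω | x / 2 < X ω} ∪ {ω | x / 2 < Y ω})).toReal :=
        ENNReal.toReal_mono (measure_lt_top _ _).ne (measure_mono hsub)
    _ ≤ rtail X (x / 2) + rtail Y (x / 2) := by
        rw [rtail, rtail, ← ENNReal.toReal_add (rtail_fin X _) (rtail_fin Y _)]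
        exact ENNReal.toReal_mono
          (by exact ENNReal.add_ne_top.mpr ⟨rtail_fin X _, rtail_fin Y _⟩)
          (measure_union_le _ _)

lemma half_isBigO {T : ℝ → ℝ} (hD : DomVar T) :
    (fun x => T (x / 2)) =O[atTop] T := by
  have := hD (1/2) ⟨by norm_num, by norm_num⟩
  simpa [div_eq_inv_mul, one_div] using this

lemma main_half {X Y Xi Yi : Ω → ℝ}
    (hX0 : ∀ ω, 0 ≤ X ω) (hY0 : ∀ ω, 0 ≤ Y ω)
    (hDX : DomVar (rtail X)) (hDY : DomVar (rtail Y))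
    (hFX : (rtail Xi) =O[atTop] (rtail X)) (hFY : (rtail Yi) =O[atTop] (rtail Y)) :
    rtail (fun ω => Xi ω + Yi ω) =O[atTop] rtail (fun ω => X ω + Y ω) := by
  have htend : Tendsto (fun x : ℝ => x / 2) atTop atTop :=
    tendsto_id.atTop_div_const (by norm_num)
  have h1 : (fun x => rtail Xi (x / 2)) =O[atTop] rtail (fun ω => X ω + Y ω) := by
    calc (fun x => rtail Xi (x / 2))
        =O[atTop] (fun x => rtail X (x / 2)) := hFX.comp_tendsto htend
      _ =O[atTop] rtail X := half_isBigO hDX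
      _ =O[atTop] rtail (fun ω => X ω + Y ω) := by
          refine isBigO_of_le _ fun x => ?_
          rw [Real.norm_of_nonneg (rtail_nonneg _ _), Real.norm_of_nonneg (rtail_nonneg _ _)]
          exact rtail_le_sum X Y hY0 x
  have h2 : (fun x => rtail Yi (x / 2)) =O[atTop] rtail (fun ω => X ω + Y ω) := by
    calc (fun x => rtail Yi (x / 2))
        =O[atTop] (fun x => rtail Y (x / 2)) := hFY.comp_tendsto htend
      _ =O[atTop] rtail Y := half_isBigO hDY
      _ =O[atTop] rtail (fun ω => X ω + Y ω) := by
          refine isBigO_of_le _ fun x => ?_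
          rw [Real.norm_of_nonneg (rtail_nonneg _ _), Real.norm_of_nonneg (rtail_nonneg _ _)]
          have : rtail Y x ≤ rtail (fun ω => Y ω + X ω) x := rtail_le_sum Y X hX0 x
          simpa [add_comm] using this
  have hle : (rtail (fun ω => Xi ω + Yi ω)) =O[atTop]
      (fun x => rtail Xi (x / 2) + rtail Yi (x / 2)) := by
    refine isBigO_of_le _ fun x => ?_
    rw [Real.norm_of_nonneg (rtail_nonneg _ _),
      Real.norm_of_nonneg (add_nonneg (rtail_nonneg _ _) (rtail_nonneg _ _))]
    exact rtail_sum_le Xi Yi x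
  exact hle.trans (h1.add h2)

end aux

/-- sums of weakly tail-equivalent nonnegative random variables with
dominatedly varying tails are weakly tail-equivalent. -/
theorem stmt2 {Ω : Type*} [MeasureSpace Ω] [IsProbabilityMeasure (ℙ : Measure Ω)]
    (X Y Xi Yi : Ω → ℝ)
    (hX0 : ∀ ω, 0 ≤ X ω) (hY0 : ∀ ω, 0 ≤ Y ω)
    (hXi0 : ∀ ω, 0 ≤ Xi ω) (hYi0 : ∀ ω, 0 ≤ Yi ω)
    (hpos : ∀ x : ℝ, 0 < rtail X x ∧ 0 < rtail Y x ∧ 0 < rtail Xi x ∧ 0 < rtail Yi x)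
    (hDX : DomVar (rtail X)) (hDY : DomVar (rtail Y))
    (hDXi : DomVar (rtail Xi)) (hDYi : DomVar (rtail Yi))
    (hFX : WeakEquiv (rtail Xi) (rtail X)) (hFY : WeakEquiv (rtail Yi) (rtail Y)) :
    WeakEquiv (rtail (fun ω => Xi ω + Yi ω)) (rtail (fun ω => X ω + Y ω)) := by
  exact ⟨main_half hX0 hY0 hDX hDY hFX.1 hFY.1,
    main_half hXi0 hYi0 hDXi hDYi hFX.2 hFY.2⟩
end

section
/- Let G and H be distributions with Ḡ(x) > 0 and H̄(x) > 0 for all x ≥ 0. Then the condition 'for every c > 0, Ḡ(cx) = o(H̄(x)) as x → ∞' holds if and only if there exists a function a : [0,∞) → (0,∞) with a(x) → ∞, a(x)/x → 0, and Ḡ(a(x)) = o(H̄(x)) as x → ∞. -/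
open Filter Asymptotics Topology

/-- characterization of the tail-domination condition via a truncation
function `a`. `Gbar` and `Hbar` are distribution tails. -/
theorem stmt7 (Gbar Hbar : ℝ → ℝ)
    (hGanti : Antitone Gbar) (hHanti : Antitone Hbar)
    (hGpos : ∀ x : ℝ, 0 ≤ x → 0 < Gbar x) (hHpos : ∀ x : ℝ, 0 ≤ x → 0 < Hbar x)
    (hG01 : ∀ x, 0 ≤ Gbar x ∧ Gbar x ≤ 1) (hH01 : ∀ x, 0 ≤ Hbar x ∧ Hbar x ≤ 1) :
    (∀ c : ℝ, 0 < c → (fun x => Gbar (c * x)) =o[atTop] Hbar) ↔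
      ∃ a : ℝ → ℝ, (∀ x, 0 < a x) ∧ Tendsto a atTop atTop ∧
        Tendsto (fun x => a x / x) atTop (𝓝 0) ∧
        (fun x => Gbar (a x)) =o[atTop] Hbar := by
  classical
  constructor
  · intro hc
    have hN : ∀ n : ℕ, ∃ N : ℝ, ∀ x, N ≤ x →
        |Gbar ((1 / ((n : ℝ) + 1)) * x)| ≤ (1 / ((n : ℝ) + 1)) * |Hbar x| := by
      intro n
      have hcn : (0:ℝ) < 1 / ((n:ℝ)+1) := by positivity
      have h := (hc _ hcn).def hcn
      rw [eventually_atTop] at h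
      obtain ⟨N, hNx⟩ := h
      exact ⟨N, fun x hx => by simpa [Real.norm_eq_abs] using hNx x hx⟩
    choose N hNspec using hN
    set M : ℕ → ℝ := fun n =>
      ((n : ℝ) + 1) ^ 2 + n + ∑ i ∈ Finset.range (n + 1), max (N i) 0 with hMdef
    have hsum_nonneg : ∀ n, 0 ≤ ∑ i ∈ Finset.range (n+1), max (N i) 0 :=
      fun n => Finset.sum_nonneg fun i _ => le_max_right _ _
    have hM1 : ∀ n : ℕ, ((n : ℝ) + 1) ^ 2 ≤ M n := by
      intro n
      have := hsum_nonneg n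
      have hn : (0:ℝ) ≤ n := Nat.cast_nonneg n
      simp only [hMdef]
      nlinarith
    have hMn1 : ∀ n : ℕ, (n : ℝ) + 1 ≤ M n := by
      intro n
      have h1 := hM1 n
      have hn : (0:ℝ) ≤ n := Nat.cast_nonneg n
      nlinarith
    have hMN : ∀ n, N n ≤ M n := by
      intro n
      have hmem : n ∈ Finset.range (n+1) := Finset.self_mem_range_succ n
      have h1 : max (N n) 0 ≤ ∑ i ∈ Finset.range (n+1), max (N i) 0 :=
        Finset.single_le_sum (f := fun i => max (N i) 0)
          (fun i _ => le_max_right _ _) hmem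
      have h2 : N n ≤ max (N n) 0 := le_max_left _ _
      have hn : (0:ℝ) ≤ n := Nat.cast_nonneg n
      have : (0:ℝ) ≤ ((n:ℝ)+1)^2 := by positivity
      simp only [hMdef]
      linarith
    have hM0 : (1:ℝ) ≤ M 0 := by simpa using hMn1 0
    set k : ℝ → ℕ := fun x => Nat.findGreatest (fun n => M n ≤ x) ⌊x⌋₊ with hkdef
    -- basic facts about k for x ≥ M 0
    have hxpos : ∀ x, M 0 ≤ x → (1:ℝ) ≤ x := fun x hx => le_trans hM0 hx
    have hk_ge : ∀ x, ∀ n, M n ≤ x → n ≤ k x := by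
      intro x n hn
      have hx0 : (0:ℝ) ≤ x := le_trans (by positivity) (le_trans (hMn1 n) hn)
      have hfl : n ≤ ⌊x⌋₊ := Nat.le_floor (le_trans (by linarith [hMn1 n]) hn)
      exact Nat.le_findGreatest hfl hn
    have hk_spec : ∀ x, M 0 ≤ x → M (k x) ≤ x := by
      intro x hx
      have hfl : 0 ≤ ⌊x⌋₊ := Nat.zero_le _
      exact Nat.findGreatest_spec (P := fun n => M n ≤ x) (m := 0) hfl hx
    set a : ℝ → ℝ := fun x => if M 0 ≤ x then x / ((k x : ℝ) + 1) else 1 with hadef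
    have ha_pos : ∀ x, 0 < a x := by
      intro x
      simp only [hadef]
      split
      · have hx1 : (1:ℝ) ≤ x := hxpos x (by assumption)
        positivity
      · exact one_pos
    -- lower bound: for M 0 ≤ x, (k x : ℝ) + 1 ≤ a x
    have ha_lb : ∀ x, M 0 ≤ x → ((k x : ℝ) + 1) ≤ a x := by
      intro x hx
      have hs := hk_spec x hx
      have h1 := hM1 (k x)
      have hkpos : (0:ℝ) < (k x : ℝ) + 1 := by positivity
      have : ((k x : ℝ) + 1) * ((k x : ℝ) + 1) ≤ x := by
        calc ((k x : ℝ) + 1) * ((k x : ℝ) + 1) = ((k x : ℝ) + 1)^2 := by ring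
        _ ≤ M (k x) := h1
        _ ≤ x := hs
      have := (le_div_iff₀ hkpos).mpr this
      simpa [hadef, hx] using this
    have ha_top : Tendsto a atTop atTop := by
      rw [tendsto_atTop]
      intro b
      obtain ⟨n, hn⟩ : ∃ n : ℕ, b ≤ (n : ℝ) + 1 := by
        obtain ⟨n, hn⟩ := exists_nat_ge b
        exact ⟨n, by linarith⟩
      filter_upwards [eventually_ge_atTop (max (M 0) (M n))] with x hx
      have hx0 : M 0 ≤ x := le_trans (le_max_left _ _) hx
      have hxn : M n ≤ x := le_trans (le_max_right _ _) hx
      have hkn : n ≤ k x := hk_ge x n hxn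
      calc b ≤ (n : ℝ) + 1 := hn
        _ ≤ (k x : ℝ) + 1 := by exact_mod_cast by linarith [(Nat.cast_le (α := ℝ)).mpr hkn]
        _ ≤ a x := ha_lb x hx0
    have ha_div : Tendsto (fun x => a x / x) atTop (𝓝 0) := by
      rw [NormedAddCommGroup.tendsto_nhds_zero]
      intro ε hε
      obtain ⟨n, hn⟩ := exists_nat_one_div_lt hε
      filter_upwards [eventually_ge_atTop (max (M 0) (M n))] with x hx
      have hx0 : M 0 ≤ x := le_trans (le_max_left _ _) hx
      have hxn : M n ≤ x := le_trans (le_max_right _ _) hx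
      have hx1 : (1:ℝ) ≤ x := hxpos x hx0
      have hxne : x ≠ 0 := by linarith
      have hkn : n ≤ k x := hk_ge x n hxn
      have hax : a x / x = 1 / ((k x : ℝ) + 1) := by
        simp only [hadef, if_pos hx0]
        field_simp
      rw [hax]
      have hk1 : (0:ℝ) < (k x : ℝ) + 1 := by positivity
      have hn1 : (0:ℝ) < (n : ℝ) + 1 := by positivity
      have hle : 1 / ((k x : ℝ) + 1) ≤ 1 / ((n : ℝ) + 1) := by
        apply one_div_le_one_div_of_le hn1
        exact_mod_cast by linarith [(Nat.cast_le (α := ℝ)).mpr hkn]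
      have : |(1:ℝ) / ((k x : ℝ) + 1)| = 1 / ((k x : ℝ) + 1) := abs_of_pos (by positivity)
      rw [Real.norm_eq_abs, this]
      exact lt_of_le_of_lt hle hn
    refine ⟨a, ha_pos, ha_top, ha_div, ?_⟩
    rw [isLittleO_iff]
    intro ε hε
    obtain ⟨n, hn⟩ := exists_nat_one_div_lt hε
    filter_upwards [eventually_ge_atTop (max (M 0) (M n))] with x hx
    have hx0 : M 0 ≤ x := le_trans (le_max_left _ _) hx
    have hxn : M n ≤ x := le_trans (le_max_right _ _) hx
    have hkn : n ≤ k x := hk_ge x n hxn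
    have hNx : N (k x) ≤ x := le_trans (hMN (k x)) (hk_spec x hx0)
    have hbound := hNspec (k x) x hNx
    have hax : a x = (1 / ((k x : ℝ) + 1)) * x := by
      simp only [hadef, if_pos hx0]
      field_simp
    have hle : (1:ℝ) / ((k x : ℝ) + 1) ≤ 1 / ((n : ℝ) + 1) := by
      apply one_div_le_one_div_of_le (by positivity)
      exact_mod_cast by linarith [(Nat.cast_le (α := ℝ)).mpr hkn]
    rw [Real.norm_eq_abs, Real.norm_eq_abs, hax]
    calc |Gbar ((1 / ((k x : ℝ) + 1)) * x)| ≤ (1 / ((k x : ℝ) + 1)) * |Hbar x| := hbound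
      _ ≤ (1 / ((n : ℝ) + 1)) * |Hbar x| := by
          apply mul_le_mul_of_nonneg_right hle (abs_nonneg _)
      _ ≤ ε * |Hbar x| := mul_le_mul_of_nonneg_right (le_of_lt hn) (abs_nonneg _)
  · rintro ⟨a, hapos, hatop, hadiv, ho⟩ c hcpos
    rw [isLittleO_iff]
    intro ε hε
    have h1 := ho.def hε
    have h2 : ∀ᶠ x in atTop, a x / x < c := hadiv.eventually (eventually_lt_nhds hcpos)
    filter_upwards [h1, h2, eventually_gt_atTop (0:ℝ)] with x hb hlt hx0
    have hax : a x < c * x := by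
      have := (div_lt_iff₀ hx0).mp hlt
      linarith
    have hGle : Gbar (c * x) ≤ Gbar (a x) := hGanti (le_of_lt hax)
    have hG1 : 0 ≤ Gbar (c * x) := (hG01 _).1
    have hG2 : 0 ≤ Gbar (a x) := (hG01 _).1
    rw [Real.norm_eq_abs, abs_of_nonneg hG1]
    calc Gbar (c * x) ≤ Gbar (a x) := hGle
      _ = ‖Gbar (a x)‖ := (Real.norm_of_nonneg hG2).symm
      _ ≤ ε * ‖Hbar x‖ := hb
end

section
/- Let X = (X₁,…,X_n) be multivariate regularly varying: there exist α ∈ (0,∞), a distribution F ∈ ℛ_{−α}, and a Radon measure ν with lim_{x→∞} P[X₁ > t₁x, …, X_n > t_nx]/F̄(x) = ν((t, (∞,…,∞)]) for all t, where ν is homogeneous of order −α and ν((1, (∞,…,∞)]) > 0. Then X has distribution in 𝒟_n; in particular for all b ∈ (0,1)ⁿ and all t, limsup_{x→∞} P[X > b t x]/P[X > t x] ≤ (min bᵢ)^{−α} < ∞. -/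
open Filter MeasureTheory Asymptotics Topology ProbabilityTheory

noncomputable def jtail {Ω : Type*} [MeasureSpace Ω] {n : ℕ} (X : Fin n → Ω → ℝ)
    (S : Finset (Fin n)) (t : Fin n → ℝ) (x : ℝ) : ℝ :=
  (ℙ {ω | ∀ i ∈ S, t i * x < X i ω}).toReal

/-- If `f/g → c` with `g` positive, then `f =O g`. -/
lemma bigO_of_div_tendsto {f g : ℝ → ℝ} (hg : ∀ x, 0 < g x) {c : ℝ}
    (h : Tendsto (fun x => f x / g x) atTop (𝓝 c)) : f =O[atTop] g := by
  have h1 : (fun x => f x / g x) =O[atTop] (fun _ => (1:ℝ)) := h.isBigO_one ℝ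
  have h2 := h1.mul (isBigO_refl g atTop)
  refine (h2.congr (fun x => ?_) (fun x => one_mul _))
  exact div_mul_cancel₀ _ (hg x).ne'

/-- If `f/g → c > 0` with `g` positive, then `g =O f`. -/
lemma bigO_rev_of_div_tendsto {f g : ℝ → ℝ} (hg : ∀ x, 0 < g x) {c : ℝ} (hc : 0 < c)
    (h : Tendsto (fun x => f x / g x) atTop (𝓝 c)) : g =O[atTop] f := by
  have hinv : Tendsto (fun x => g x / f x) atTop (𝓝 c⁻¹) := by
    have := h.inv₀ hc.ne'
    simpa [inv_div] using this
  have h1 : (fun x => g x / f x) =O[atTop] (fun _ => (1:ℝ)) := hinv.isBigO_one ℝ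
  have h2 := h1.mul (isBigO_refl f atTop)
  have hev : ∀ᶠ x in atTop, f x ≠ 0 := by
    filter_upwards [h.eventually (eventually_gt_nhds (half_lt_self hc))] with x hx
    intro h0
    rw [h0, zero_div] at hx
    linarith
  refine h2.congr' ?_ (by filter_upwards with x using one_mul _)
  filter_upwards [hev] with x hx
  exact (div_mul_cancel₀ _ hx)

/-- Monotonicity of the joint tail in the threshold vector. -/
lemma jtail_mono {Ω : Type*} [MeasureSpace Ω] [IsProbabilityMeasure (ℙ : Measure Ω)]
    {n : ℕ} (X : Fin n → Ω → ℝ) {S T : Finset (Fin n)} (hST : S ⊆ T)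
    {s t : Fin n → ℝ} {x : ℝ} (hx : 0 ≤ x) (h : ∀ i ∈ S, s i ≤ t i) :
    jtail X T t x ≤ jtail X S s x := by
  unfold jtail
  refine ENNReal.toReal_mono (measure_ne_top _ _) (measure_mono ?_)
  intro ω hω i hi
  exact lt_of_le_of_lt (mul_le_mul_of_nonneg_right (h i hi) hx) (hω i (hST hi))

/-- a multivariate regularly varying random vector with
`ν((1,(∞,…,∞)]) > 0` belongs to `𝒟ₙ`, with the explicit bound
`limsup P[X > b t x]/P[X > t x] ≤ (min bᵢ)^{-α}`. Here `νbar S t` encodes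
`ν((t,(∞,…,∞)])` for the sub-vector indexed by `S`. -/
theorem stmt14 {Ω : Type*} [MeasureSpace Ω] [IsProbabilityMeasure (ℙ : Measure Ω)]
    {n : ℕ} (hn : 0 < n) (X : Fin n → Ω → ℝ)
    (α : ℝ) (hα : 0 < α) (Fbar : ℝ → ℝ) (hFpos : ∀ x, 0 < Fbar x)
    (hRV : ∀ t : ℝ, 0 < t →
      Tendsto (fun x => Fbar (t * x) / Fbar x) atTop (𝓝 (t ^ (-α))))
    (νbar : Finset (Fin n) → (Fin n → ℝ) → ℝ)
    (hconv : ∀ S : Finset (Fin n), S.Nonempty → ∀ t : Fin n → ℝ, (∀ i, 0 < t i) →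
      Tendsto (fun x => jtail X S t x / Fbar x) atTop (𝓝 (νbar S t)))
    (hhom : ∀ S : Finset (Fin n), ∀ t : Fin n → ℝ, ∀ y : ℝ, 0 < y →
      νbar S (fun i => y * t i) = y ^ (-α) * νbar S t)
    (hν1 : 0 < νbar Finset.univ (fun _ => 1)) :
    (∃ F0 : ℝ → ℝ, (∀ x, 0 < F0 x) ∧ DomVar F0 ∧ ∀ i, WeakEquiv (rtail (X i)) F0) ∧
    ∀ S : Finset (Fin n), S.Nonempty → ∀ t b : Fin n → ℝ,
      (∀ i, 0 < t i) → (∀ i, b i ∈ Set.Ioo (0:ℝ) 1) →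
      limsup (fun x => jtail X S (fun i => b i * t i) x / jtail X S t x) atTop
        ≤ (⨅ i, b i) ^ (-α) := by
  haveI : Nonempty (Fin n) := ⟨⟨0, hn⟩⟩
  -- Positivity of νbar on nonempty S, positive t
  have νpos : ∀ S : Finset (Fin n), S.Nonempty → ∀ t : Fin n → ℝ, (∀ i, 0 < t i) →
      0 < νbar S t := by
    intro S hS t ht
    obtain ⟨i0, hi0⟩ := Finite.exists_max t
    set M := t i0 with hMdef
    have hM : 0 < M := ht i0
    have h1 := hconv Finset.univ Finset.univ_nonempty (fun _ => M) (fun _ => hM)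
    have h2 := hconv S hS t ht
    have hle : νbar Finset.univ (fun _ => M) ≤ νbar S t := by
      refine le_of_tendsto_of_tendsto h1 h2 ?_
      filter_upwards [eventually_ge_atTop (0:ℝ)] with x hx
      have := jtail_mono X (Finset.subset_univ S) hx (t := fun _ => M) (s := t)
        (fun i _ => hi0 i)
      exact div_le_div_of_nonneg_right this (hFpos x).le
    have heq : νbar Finset.univ (fun _ => M) = M ^ (-α) * νbar Finset.univ (fun _ => 1) := by
      have := hhom Finset.univ (fun _ => 1) M hM
      simpa using this
    have hpos : 0 < νbar Finset.univ (fun _ => M) := by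
      rw [heq]; exact mul_pos (Real.rpow_pos_of_pos hM _) hν1
    exact hpos.trans_le hle
  constructor
  · refine ⟨Fbar, hFpos, ?_, ?_⟩
    · intro b hb
      exact bigO_of_div_tendsto hFpos (hRV b hb.1)
    · intro i
      have hrt : rtail (X i) = jtail X {i} (fun _ => 1) := by
        funext x
        unfold rtail jtail
        congr 1
        congr 1
        ext ω
        simp
      have hS : ({i} : Finset (Fin n)).Nonempty := ⟨i, Finset.mem_singleton_self i⟩
      have hc := hconv {i} hS (fun _ => 1) (fun _ => one_pos)
      have hcpos : 0 < νbar {i} (fun _ => 1) := νpos {i} hS _ (fun _ => one_pos)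
      rw [hrt]
      exact ⟨bigO_of_div_tendsto hFpos hc, bigO_rev_of_div_tendsto hFpos hcpos hc⟩
  · intro S hS t b ht hb
    set m := ⨅ i, b i with hmdef
    obtain ⟨j0, hj0⟩ := Finite.exists_min b
    have hm_eq : m = b j0 := by
      refine le_antisymm (ciInf_le (Finite.bddBelow_range b) j0) (le_ciInf hj0)
    have hm0 : 0 < m := hm_eq ▸ (hb j0).1
    have hmle : ∀ i, m ≤ b i := fun i => hm_eq ▸ hj0 i
    have hbt : ∀ i, 0 < b i * t i := fun i => mul_pos (hb i).1 (ht i)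
    have hmt : ∀ i, 0 < m * t i := fun i => mul_pos hm0 (ht i)
    have h1 := hconv S hS (fun i => b i * t i) hbt
    have h2 := hconv S hS t ht
    have hν2 : 0 < νbar S t := νpos S hS t ht
    -- ν(b·t) ≤ ν(m·t) = m^{-α} ν(t)
    have hνle : νbar S (fun i => b i * t i) ≤ m ^ (-α) * νbar S t := by
      have h3 := hconv S hS (fun i => m * t i) hmt
      have hle : νbar S (fun i => b i * t i) ≤ νbar S (fun i => m * t i) := by
        refine le_of_tendsto_of_tendsto h1 h3 ?_
        filter_upwards [eventually_ge_atTop (0:ℝ)] with x hx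
        have := jtail_mono X (Finset.Subset.refl S) hx
          (t := fun i => b i * t i) (s := fun i => m * t i)
          (fun i _ => mul_le_mul_of_nonneg_right (hmle i) (ht i).le)
        exact div_le_div_of_nonneg_right this (hFpos x).le
      calc νbar S (fun i => b i * t i) ≤ νbar S (fun i => m * t i) := hle
        _ = m ^ (-α) * νbar S t := hhom S t m hm0
    -- the ratio converges to ν(b·t)/ν(t)
    have hdiv : Tendsto (fun x => jtail X S (fun i => b i * t i) x / jtail X S t x) atTop
        (𝓝 (νbar S (fun i => b i * t i) / νbar S t)) := by
      have h4 := h1.div h2 hν2.ne'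
      refine h4.congr (fun x => ?_)
      show jtail X S (fun i => b i * t i) x / Fbar x / (jtail X S t x / Fbar x) = _
      rw [div_div_div_comm, div_self (hFpos x).ne', div_one]
    rw [hdiv.limsup_eq]
    rw [div_le_iff₀ hν2]
    exact hνle
end

section
/- Let X = (X₁,…,X_n) be multivariate regularly varying with index α > 0, limit measure ν satisfying ν((1, (∞,…,∞)]) > 0, and suppose the marginal tails are strongly equivalent: F̄ᵢ(x) ~ c_{ij} F̄ⱼ(x) with c_{ij} > 0. Then X has distribution in 𝒫_𝒟_n: for all v = (v₁,…,v_n) with every vᵢ > 1 and all t ∈ (0,∞]ⁿ \ {(∞,…,∞)}, limsup_{x→∞} P[X > v t x]/P[X > t x] ≤ (min vᵢ)^{−α} < 1. -/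
open Filter MeasureTheory Asymptotics Topology ProbabilityTheory

def PosDec (T : ℝ → ℝ) : Prop :=
  ∀ v : ℝ, 1 < v → limsup (fun x => T (v * x) / T x) atTop < 1

lemma jtail_nonneg {Ω : Type*} [MeasureSpace Ω] {n : ℕ} (X : Fin n → Ω → ℝ)
    (S : Finset (Fin n)) (t : Fin n → ℝ) (x : ℝ) : 0 ≤ jtail X S t x :=
  ENNReal.toReal_nonneg

lemma jtail_le {Ω : Type*} [MeasureSpace Ω] [IsProbabilityMeasure (ℙ : Measure Ω)]
    {n : ℕ} (X : Fin n → Ω → ℝ) {S S' : Finset (Fin n)} {t t' : Fin n → ℝ} {x : ℝ}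
    (hS : S ⊆ S') (h : ∀ i ∈ S, t i * x ≤ t' i * x) :
    jtail X S' t' x ≤ jtail X S t x := by
  apply ENNReal.toReal_mono (measure_ne_top _ _)
  apply measure_mono
  intro ω hω i hi
  exact lt_of_le_of_lt (h i hi) (hω i (hS hi))

lemma div_le_div_same' {a b c : ℝ} (hab : a ≤ b) (hc : 0 ≤ c) : a / c ≤ b / c := by
  rcases hc.eq_or_lt with h | h
  · simp [← h]
  · exact (div_le_div_iff_of_pos_right h).mpr hab

/-- a multivariate regularly varying random vector with
`ν((1,(∞,…,∞)]) > 0` and strongly equivalent marginal tails belongs to `𝒫𝒟ₙ`, with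
the explicit bound `limsup P[X > v t x]/P[X > t x] ≤ (min vᵢ)^{-α} < 1`. -/
theorem stmt15 {Ω : Type*} [MeasureSpace Ω] [IsProbabilityMeasure (ℙ : Measure Ω)]
    {n : ℕ} (hn : 0 < n) (X : Fin n → Ω → ℝ)
    (α : ℝ) (hα : 0 < α) (Fbar : ℝ → ℝ) (hFpos : ∀ x, 0 < Fbar x)
    (hRV : ∀ t : ℝ, 0 < t →
      Tendsto (fun x => Fbar (t * x) / Fbar x) atTop (𝓝 (t ^ (-α))))
    (νbar : Finset (Fin n) → (Fin n → ℝ) → ℝ)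
    (hconv : ∀ S : Finset (Fin n), S.Nonempty → ∀ t : Fin n → ℝ, (∀ i, 0 < t i) →
      Tendsto (fun x => jtail X S t x / Fbar x) atTop (𝓝 (νbar S t)))
    (hhom : ∀ S : Finset (Fin n), ∀ t : Fin n → ℝ, ∀ y : ℝ, 0 < y →
      νbar S (fun i => y * t i) = y ^ (-α) * νbar S t)
    (hν1 : 0 < νbar Finset.univ (fun _ => 1))
    (hstrong : ∀ i j : Fin n, ∃ c : ℝ, 0 < c ∧
      Tendsto (fun x => rtail (X i) x / rtail (X j) x) atTop (𝓝 c)) :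
    (∃ F0 : ℝ → ℝ, (∀ x, 0 < F0 x) ∧ PosDec F0 ∧
      ∀ i, ∃ c : ℝ, 0 < c ∧ Tendsto (fun x => rtail (X i) x / F0 x) atTop (𝓝 c)) ∧
    ∀ S : Finset (Fin n), S.Nonempty → ∀ t v : Fin n → ℝ,
      (∀ i, 0 < t i) → (∀ i, 1 < v i) →
      limsup (fun x => jtail X S (fun i => v i * t i) x / jtail X S t x) atTop
          ≤ (⨅ i, v i) ^ (-α) ∧
        (⨅ i, v i) ^ (-α) < 1 := by
  haveI : Nonempty (Fin n) := ⟨⟨0, hn⟩⟩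
  have hα' : -α < 0 := by linarith
  -- a general positivity fact for νbar S t
  have hνpos : ∀ S : Finset (Fin n), S.Nonempty → ∀ t : Fin n → ℝ, (∀ i, 0 < t i) →
      0 < νbar S t := by
    intro S hS t ht
    obtain ⟨j0, _, hj0⟩ := Finset.exists_max_image Finset.univ t Finset.univ_nonempty
    set M := t j0 with hM
    have hMpos : 0 < M := ht j0
    have hc1 := hconv Finset.univ Finset.univ_nonempty (fun _ => M) (fun _ => hMpos)
    have hc2 := hconv S hS t ht
    have hle : νbar Finset.univ (fun _ => M) ≤ νbar S t := by
      refine le_of_tendsto_of_tendsto hc1 hc2 ?_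
      filter_upwards [eventually_ge_atTop (0 : ℝ)] with x hx
      refine div_le_div_same' ?_ (hFpos x).le
      refine jtail_le X (Finset.subset_univ S) (fun i _ => ?_)
      exact mul_le_mul_of_nonneg_right (hj0 i (Finset.mem_univ i)) hx
    have hhomM := hhom Finset.univ (fun _ => 1) M hMpos
    simp only [mul_one] at hhomM
    calc (0 : ℝ) < M ^ (-α) * νbar Finset.univ (fun _ => 1) :=
          mul_pos (Real.rpow_pos_of_pos hMpos _) hν1
      _ = νbar Finset.univ (fun _ => M) := hhomM.symm
      _ ≤ νbar S t := hle
  constructor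
  · refine ⟨Fbar, hFpos, ?_, ?_⟩
    · intro v hv
      rw [(hRV v (by linarith)).limsup_eq]
      exact Real.rpow_lt_one_of_one_lt_of_neg hv hα'
    · intro i
      have hSi : ({i} : Finset (Fin n)).Nonempty := ⟨i, Finset.mem_singleton_self i⟩
      refine ⟨νbar {i} (fun _ => 1), hνpos _ hSi _ (fun _ => one_pos), ?_⟩
      have key := hconv {i} hSi (fun _ => 1) (fun _ => one_pos)
      have heq : ∀ x, jtail X {i} (fun _ : Fin n => (1 : ℝ)) x = rtail (X i) x := by
        intro x
        unfold jtail rtail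
        simp
      refine key.congr fun x => by rw [heq]
  · intro S hS t v ht hv
    set m := ⨅ i, v i with hm
    have hbdd : BddBelow (Set.range v) := (Set.finite_range v).bddBelow
    have hm_le : ∀ i, m ≤ v i := fun i => ciInf_le hbdd i
    obtain ⟨i0, _, hi0⟩ := Finset.exists_min_image Finset.univ v Finset.univ_nonempty
    have hmi0 : m = v i0 :=
      le_antisymm (ciInf_le hbdd i0) (le_ciInf fun i => hi0 i (Finset.mem_univ i))
    have h1m : 1 < m := hmi0 ▸ hv i0
    have hm_pos : 0 < m := by linarith
    have hbound : m ^ (-α) < 1 := Real.rpow_lt_one_of_one_lt_of_neg h1m hα'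
    refine ⟨?_, hbound⟩
    have hden := hconv S hS t ht
    have hdenpos := hνpos S hS t ht
    have hnum := hconv S hS (fun i => m * t i) (fun i => mul_pos hm_pos (ht i))
    rw [hhom S t m hm_pos] at hnum
    -- Tendsto of jtail (m•t) / jtail t to m^(-α)
    have htm : Tendsto (fun x => jtail X S (fun i => m * t i) x / jtail X S t x)
        atTop (𝓝 (m ^ (-α))) := by
      have h := hnum.div hden (ne_of_gt hdenpos)
      have heq : ∀ x, jtail X S (fun i => m * t i) x / Fbar x / (jtail X S t x / Fbar x)
          = jtail X S (fun i => m * t i) x / jtail X S t x := by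
        intro x
        rw [div_div_div_cancel_right₀ (ne_of_gt (hFpos x))]
      have hlim : m ^ (-α) * νbar S t / νbar S t = m ^ (-α) := by
        field_simp
      rw [hlim] at h
      exact h.congr heq
    have hev : (fun x => jtail X S (fun i => v i * t i) x / jtail X S t x) ≤ᶠ[atTop]
        (fun x => jtail X S (fun i => m * t i) x / jtail X S t x) := by
      filter_upwards [eventually_ge_atTop (0 : ℝ)] with x hx
      refine div_le_div_same' ?_ (jtail_nonneg X S t x)
      refine jtail_le X (le_refl S) (fun i _ => ?_)
      exact mul_le_mul_of_nonneg_right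
        (mul_le_mul_of_nonneg_right (hm_le i) (ht i).le) hx
    calc limsup (fun x => jtail X S (fun i => v i * t i) x / jtail X S t x) atTop
        ≤ limsup (fun x => jtail X S (fun i => m * t i) x / jtail X S t x) atTop := by
          refine limsup_le_limsup hev ?_ ?_
          · exact isCoboundedUnder_le_of_le atTop
              (fun x => div_nonneg (jtail_nonneg X S _ x) (jtail_nonneg X S t x))
          · exact htm.isBoundedUnder_le
      _ = m ^ (-α) := htm.limsup_eq
end

section
/- Let X be an n-dimensional random vector with identically distributed components and distribution F ∈ 𝒫_𝒟_n, and Y an independent random variable with G(0−) = 0, G(0) < 1. Suppose there is a function a(x) → ∞ with a(x)/x → 0 and Ḡ(a(x)) = o(H̄(t,x)) for all t, where H̄(t,x) = P[YX₁ > t₁x, …, YX_n > t_nx]. Then the distribution H of the scalar product Y·X belongs to 𝒫_𝒟_n: for all v > 1 componentwise and all t ∈ (0,∞]ⁿ \ {(∞,…,∞)}, limsup_{x→∞} H̄(v t, x)/H̄(t, x) < 1. -/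
open Filter MeasureTheory Asymptotics Topology ProbabilityTheory

/-! Conditioning on `Y = y` turns the joint tail of `Y • X` at level `x` into the joint tail of
`X` at level `x / y`. For `0 < y ≤ a x` this level is at least `x / a x → ∞`, so the eventual
bound `P[X > v t z] ≤ u P[X > t z]` with `u < 1` holds slice by slice and integrates to the
same bound for `Y • X` on `{0 < Y ≤ a x}`. The event `{Y > a x}` costs `Ḡ(a x)`, which is
negligible against `H̄(t, x)` by assumption, and `{Y = 0}` contributes nothing.

Since the `Xᵢ` are equally distributed and independent of `Y`, all marginals of `Y • X` have the
same tail, which therefore serves as the kernel; its decrease is the case `S = {i}` of the joint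
statement. -/

open scoped ENNReal

section Asymptotics

variable {α : Type*} {l : Filter α} {f g : α → ℝ}

lemma exists_eventually_le_mul_of_limsup_div_lt {c : ℝ} (hc : 0 < c) (hf : ∀ x, 0 ≤ f x)
    (hfg : ∀ᶠ x in l, f x ≤ g x) (hlim : limsup (fun x => f x / g x) l < c) :
    ∃ u, 0 ≤ u ∧ u < c ∧ ∀ᶠ x in l, f x ≤ u * g x := by
  obtain ⟨u, hu, huc⟩ := exists_between (max_lt hlim hc)
  have hbdd : IsBoundedUnder (· ≤ ·) l (fun x => f x / g x) :=
    isBoundedUnder_of_eventually_le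
      (hfg.mono fun x hx => div_le_one_of_le₀ hx ((hf x).trans hx))
  refine ⟨u, (le_max_right _ _).trans hu.le, huc, ?_⟩
  filter_upwards [hfg, eventually_lt_of_limsup_lt ((le_max_left _ _).trans_lt hu) hbdd]
    with x hfgx hlt
  rcases ((hf x).trans hfgx).eq_or_lt with hg | hg
  · rw [← hg] at hfgx ⊢
    linarith
  · exact ((div_lt_iff₀ hg).mp hlt).le

lemma limsup_div_le_of_le_mul_add_isLittleO [l.NeBot] {h : α → ℝ} {u : ℝ} (hu : 0 ≤ u)
    (hf : ∀ x, 0 ≤ f x) (hg : ∀ x, 0 ≤ g x) (hfg : ∀ᶠ x in l, f x ≤ u * g x + h x)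
    (hh : h =o[l] g) : limsup (fun x => f x / g x) l ≤ u := by
  refine le_of_forall_pos_le_add fun ε hε => limsup_le_of_le
    (isCoboundedUnder_le_of_le l fun x => div_nonneg (hf x) (hg x)) ?_
  filter_upwards [hfg, hh.bound hε] with x hfgx hhx
  rw [Real.norm_of_nonneg (hg x)] at hhx
  rcases (hg x).eq_or_lt with hg0 | hg0
  · rw [← hg0, div_zero]
    positivity
  · rw [div_le_iff₀ hg0]
    linarith [Real.le_norm_self (h x)]

lemma eventually_mul_le_of_tendsto_div_zero {a : ℝ → ℝ}
    (ha : Tendsto (fun x => a x / x) atTop (𝓝 0)) {C : ℝ} (hC : 0 ≤ C) :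
    ∀ᶠ x in atTop, C * a x ≤ x := by
  filter_upwards [ha.eventually (eventually_lt_nhds (show (0 : ℝ) < 1 / (C + 1) by positivity)),
    eventually_gt_atTop 0] with x hax hx
  rw [div_lt_div_iff₀ hx (by positivity), one_mul] at hax
  nlinarith

end Asymptotics

lemma MeasureTheory.Measure.prod_le_mul_of_forall_slice_le {α β : Type*} [MeasurableSpace α]
    [MeasurableSpace β] {μ : Measure α} {ν : Measure β} [SFinite μ] [SFinite ν]
    {s t : Set (α × β)} (hs : MeasurableSet s) (ht : MeasurableSet t) (c : ℝ≥0∞)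
    (h : ∀ y, μ ((·, y) ⁻¹' s) ≤ c * μ ((·, y) ⁻¹' t)) :
    μ.prod ν s ≤ c * μ.prod ν t := by
  rw [Measure.prod_apply_symm hs, Measure.prod_apply_symm ht,
    ← lintegral_const_mul c (measurable_measure_prodMk_right ht)]
  exact lintegral_mono h

section Tails

variable {Ω : Type*} [MeasureSpace Ω] {n : ℕ}

lemma jtail_singleton (X : Fin n → Ω → ℝ) (i : Fin n) (t : Fin n → ℝ) (x : ℝ) :
    jtail X {i} t x = rtail (X i) (t i * x) := by
  simp [jtail, rtail]

lemma jtail_anti [IsFiniteMeasure (ℙ : Measure Ω)] (X : Fin n → Ω → ℝ) (S : Finset (Fin n))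
    {s t : Fin n → ℝ} {x : ℝ} (h : ∀ i ∈ S, t i * x ≤ s i * x) :
    jtail X S s x ≤ jtail X S t x :=
  ENNReal.toReal_mono (measure_ne_top _ _)
    (measure_mono fun _ hω i hi => (h i hi).trans_lt (hω i hi))

lemma rtail_pos_of_tendsto [IsFiniteMeasure (ℙ : Measure Ω)] {Z : Ω → ℝ} {F : ℝ → ℝ} {c : ℝ}
    (hc : 0 < c) (h : Tendsto (fun x => rtail Z x / F x) atTop (𝓝 c)) (x : ℝ) :
    0 < rtail Z x := by
  obtain ⟨w, hw⟩ := (h.eventually (eventually_gt_nhds hc)).and (eventually_ge_atTop x) |>.exists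
  have hpos : 0 < rtail Z w :=
    ENNReal.toReal_nonneg.lt_of_ne fun h0 => by
      simp only [rtail, ← h0, zero_div, lt_self_iff_false, false_and] at hw
  exact hpos.trans_le <| ENNReal.toReal_mono (measure_ne_top _ _)
    (measure_mono fun ω hω => hw.2.trans_lt hω)

end Tails

section Product

variable {Ω : Type*} [MeasureSpace Ω] [IsProbabilityMeasure (ℙ : Measure Ω)]

lemma identDistrib_of_forall_measure_lt_eq {X X' : Ω → ℝ} (hX : Measurable X)
    (hX' : Measurable X') (h : ∀ x, ℙ {ω | x < X ω} = ℙ {ω | x < X' ω}) :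
    IdentDistrib X X' ℙ ℙ where
  aemeasurable_fst := hX.aemeasurable
  aemeasurable_snd := hX'.aemeasurable
  map_eq := by
    have := Measure.isProbabilityMeasure_map (μ := ℙ) hX.aemeasurable
    have := Measure.isProbabilityMeasure_map (μ := ℙ) hX'.aemeasurable
    refine Measure.ext_of_Iic _ _ fun x => ?_
    rw [← Set.compl_Ioi, prob_compl_eq_one_sub measurableSet_Ioi,
      prob_compl_eq_one_sub measurableSet_Ioi, Measure.map_apply hX measurableSet_Ioi,
      Measure.map_apply hX' measurableSet_Ioi]
    exact congrArg (1 - ·) (h x)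

lemma rtail_mul_eq_of_identDistrib {X X' Y : Ω → ℝ} (hY : Measurable Y)
    (hXX' : IdentDistrib X X' ℙ ℙ) (hXY : IndepFun X Y ℙ) (hX'Y : IndepFun X' Y ℙ) (x : ℝ) :
    rtail (fun ω => Y ω * X ω) x = rtail (fun ω => Y ω * X' ω) x := by
  have hprod := (hXX'.prodMk (IdentDistrib.refl hY.aemeasurable) hXY hX'Y).comp
    (measurable_snd.mul measurable_fst)
  exact congrArg ENNReal.toReal (hprod.measure_mem_eq measurableSet_Ioi)

lemma exists_pos_measure_Ici_pos {Y : Ω → ℝ} (hY : Measurable Y) (hY0 : ℙ {ω | Y ω ≤ 0} < 1) :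
    ∃ ε > 0, 0 < ℙ (Y ⁻¹' Set.Ici ε) := by
  have hcompl : ⋃ k : ℕ, Y ⁻¹' Set.Ici (1 / (k + 1)) = {ω | Y ω ≤ 0}ᶜ := by
    ext ω
    simp only [Set.mem_iUnion, Set.mem_preimage, Set.mem_Ici, Set.mem_compl_iff,
      Set.mem_ofPred_eq, not_le]
    exact ⟨fun ⟨k, hk⟩ => lt_of_lt_of_le Nat.one_div_pos_of_nat hk,
      fun h => (exists_nat_one_div_lt h).imp fun _ => le_of_lt⟩
  have hpos : ℙ (⋃ k : ℕ, Y ⁻¹' Set.Ici (1 / (k + 1))) ≠ 0 := by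
    rw [hcompl, prob_compl_eq_one_sub (measurableSet_le hY measurable_const)]
    exact (tsub_pos_of_lt hY0).ne'
  obtain ⟨k, hk⟩ := exists_measure_pos_of_not_measure_iUnion_null hpos
  exact ⟨_, Nat.one_div_pos_of_nat, hk⟩

lemma rtail_mul_pos {X Y : Ω → ℝ} (hY : Measurable Y) (hXY : IndepFun X Y ℙ)
    (hY0 : ℙ {ω | Y ω ≤ 0} < 1) (hX : ∀ z, 0 < rtail X z) (x : ℝ) :
    0 < rtail (fun ω => Y ω * X ω) x := by
  obtain ⟨ε, hε, hYε⟩ := exists_pos_measure_Ici_pos hY hY0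
  set z : ℝ := max (x / ε) 0
  have hsub : X ⁻¹' Set.Ioi z ∩ Y ⁻¹' Set.Ici ε ⊆ {ω | x < Y ω * X ω} := by
    rintro ω ⟨hXω : z < X ω, hYω : ε ≤ Y ω⟩
    have hz : x ≤ ε * z := by
      rw [← div_le_iff₀' hε]
      exact le_max_left _ _
    have hz0 : 0 ≤ z := le_max_right _ _
    show x < Y ω * X ω
    nlinarith
  have hXz : ℙ (X ⁻¹' Set.Ioi z) ≠ 0 := fun h0 => (hX z).ne' <| by
    change (ℙ (X ⁻¹' Set.Ioi z)).toReal = 0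
    simp [h0]
  refine ENNReal.toReal_pos (fun h0 => ?_) (measure_ne_top _ _)
  have := measure_mono_null hsub h0
  rw [hXY.measure_inter_preimage_eq_mul _ _ measurableSet_Ioi measurableSet_Ici,
    mul_eq_zero] at this
  exact this.elim hXz hYε.ne'

end Product

section ScalarProduct

variable {Ω : Type*} [MeasureSpace Ω] [IsProbabilityMeasure (ℙ : Measure Ω)] {n : ℕ}

lemma ofReal_jtail (X : Fin n → Ω → ℝ) (S : Finset (Fin n)) (t : Fin n → ℝ) (x : ℝ) :
    ENNReal.ofReal (jtail X S t x) = ℙ {ω | ∀ i ∈ S, t i * x < X i ω} :=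
  ENNReal.ofReal_toReal (measure_ne_top _ _)

lemma measure_Ioc_and_mul_le {X : Fin n → Ω → ℝ} {Y : Ω → ℝ} (hX : ∀ i, Measurable (X i))
    (hY : Measurable Y) (hXY : IndepFun (fun ω i => X i ω) Y ℙ) {S : Finset (Fin n)}
    {s t : Fin n → ℝ} {u x₀ : ℝ} (hu : 0 ≤ u) (hx₀ : 0 ≤ x₀)
    (hst : ∀ z ≥ x₀, jtail X S s z ≤ u * jtail X S t z) {x M : ℝ} (hM : x₀ * M ≤ x) :
    ℙ {ω | Y ω ∈ Set.Ioc 0 M ∧ ∀ i ∈ S, s i * x < Y ω * X i ω} ≤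
      ENNReal.ofReal u * ℙ {ω | Y ω ∈ Set.Ioc 0 M ∧ ∀ i ∈ S, t i * x < Y ω * X i ω} := by
  set V : Ω → Fin n → ℝ := fun ω i => X i ω
  have hV : Measurable V := measurable_pi_lambda _ hX
  set μ := Measure.map V ℙ
  -- `T c` is the event `{0 < Y ≤ M, Y X > c x}` on the law side, written so that its slice at
  -- `Y = y` is the orthant `{X > c (x / y)}`.
  let T : (Fin n → ℝ) → Set ((Fin n → ℝ) × ℝ) := fun c =>
    {q | q.2 ∈ Set.Ioc 0 M ∧ ∀ i ∈ S, c i * (x / q.2) < q.1 i}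
  have hT : ∀ c, MeasurableSet (T c) := fun c => by measurability
  have hlaw : ∀ c, ℙ {ω | Y ω ∈ Set.Ioc 0 M ∧ ∀ i ∈ S, c i * x < Y ω * X i ω} =
      μ.prod (Measure.map Y ℙ) (T c) := by
    intro c
    rw [← hXY.map_prod_eq_prod_map_map hV.aemeasurable hY.aemeasurable,
      Measure.map_apply (hV.prodMk hY) (hT c)]
    congr 1
    ext ω
    refine and_congr_right fun hYω => forall₂_congr fun i _ => ?_
    show _ ↔ c i * (x / Y ω) < X i ω
    rw [← mul_div_assoc, div_lt_iff₀ hYω.1, mul_comm (X i ω)]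
  rw [hlaw, hlaw]
  refine Measure.prod_le_mul_of_forall_slice_le (hT s) (hT t) _ fun y => ?_
  by_cases hy : 0 < y ∧ y ≤ M
  · have hz : x₀ ≤ x / y :=
      (le_div_iff₀ hy.1).2 ((mul_le_mul_of_nonneg_left hy.2 hx₀).trans hM)
    have hslice : ∀ c, μ ((·, y) ⁻¹' T c) = ENNReal.ofReal (jtail X S c (x / y)) := by
      intro c
      rw [ofReal_jtail, Measure.map_apply hV (by measurability)]
      simp [T, V, hy]
    rw [hslice, hslice, ← ENNReal.ofReal_mul hu]
    exact ENNReal.ofReal_le_ofReal (hst _ hz)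
  · simp [T, hy]

lemma jtail_mul_le {X : Fin n → Ω → ℝ} {Y : Ω → ℝ} (hX : ∀ i, Measurable (X i))
    (hY : Measurable Y) (hXY : IndepFun (fun ω i => X i ω) Y ℙ) (hY0 : ℙ {ω | Y ω < 0} = 0)
    {S : Finset (Fin n)} (hS : S.Nonempty) {s t : Fin n → ℝ} (hs : ∀ i ∈ S, 0 < s i)
    {u x₀ : ℝ} (hu : 0 ≤ u) (hx₀ : 0 ≤ x₀)
    (hst : ∀ z ≥ x₀, jtail X S s z ≤ u * jtail X S t z) {x M : ℝ} (hx : 0 < x)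
    (hM : x₀ * M ≤ x) :
    jtail (fun i ω => Y ω * X i ω) S s x ≤
      u * jtail (fun i ω => Y ω * X i ω) S t x + rtail Y M := by
  have hcover : {ω | ∀ i ∈ S, s i * x < Y ω * X i ω} ⊆
      {ω | Y ω ∈ Set.Ioc 0 M ∧ ∀ i ∈ S, s i * x < Y ω * X i ω} ∪ {ω | Y ω < 0} ∪
        {ω | M < Y ω} := by
    intro ω hω
    rcases lt_or_ge (Y ω) 0 with hneg | hnonneg
    · exact Or.inl (Or.inr hneg)
    rcases le_or_gt (Y ω) M with hle | hgt
    · obtain ⟨j, hj⟩ := hS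
      have hpos : 0 < Y ω := hnonneg.lt_of_ne fun h0 => by
        have := hω j hj
        rw [← h0, zero_mul] at this
        exact this.not_gt (mul_pos (hs j hj) hx)
      exact Or.inl (Or.inl ⟨⟨hpos, hle⟩, hω⟩)
    · exact Or.inr hgt
  have hmeasure : ℙ {ω | ∀ i ∈ S, s i * x < Y ω * X i ω} ≤
      ENNReal.ofReal u * ℙ {ω | ∀ i ∈ S, t i * x < Y ω * X i ω} + ℙ {ω | M < Y ω} :=
    calc ℙ {ω | ∀ i ∈ S, s i * x < Y ω * X i ω}
        ≤ ℙ {ω | Y ω ∈ Set.Ioc 0 M ∧ ∀ i ∈ S, s i * x < Y ω * X i ω} + ℙ {ω | Y ω < 0} +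
            ℙ {ω | M < Y ω} :=
          (measure_mono hcover).trans <| (measure_union_le _ _).trans <|
            add_le_add_left (measure_union_le _ _) _
      _ ≤ ENNReal.ofReal u * ℙ {ω | Y ω ∈ Set.Ioc 0 M ∧ ∀ i ∈ S, t i * x < Y ω * X i ω} +
            ℙ {ω | M < Y ω} := by
          rw [hY0, add_zero]
          gcongr
          exact measure_Ioc_and_mul_le hX hY hXY hu hx₀ hst hM
      _ ≤ ENNReal.ofReal u * ℙ {ω | ∀ i ∈ S, t i * x < Y ω * X i ω} + ℙ {ω | M < Y ω} := by
          gcongr ENNReal.ofReal u * ℙ ?_ + _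
          exact fun ω hω => hω.2
  calc jtail (fun i ω => Y ω * X i ω) S s x
      ≤ (ENNReal.ofReal u * ℙ {ω | ∀ i ∈ S, t i * x < Y ω * X i ω} + ℙ {ω | M < Y ω}).toReal :=
        ENNReal.toReal_mono (by finiteness) hmeasure
    _ = u * jtail (fun i ω => Y ω * X i ω) S t x + rtail Y M := by
        rw [ENNReal.toReal_add (by finiteness) (by finiteness), ENNReal.toReal_mul,
          ENNReal.toReal_ofReal hu]
        rfl

end ScalarProduct

theorem limsup_jtail_mul_div_lt_one {Ω : Type*} [MeasureSpace Ω]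
    [IsProbabilityMeasure (ℙ : Measure Ω)] {n : ℕ} {X : Fin n → Ω → ℝ} {Y : Ω → ℝ}
    (hX : ∀ i, Measurable (X i)) (hY : Measurable Y) (hXY : IndepFun (fun ω i => X i ω) Y ℙ)
    (hY0 : ℙ {ω | Y ω < 0} = 0) {S : Finset (Fin n)} (hS : S.Nonempty) {t v : Fin n → ℝ}
    (ht : ∀ i, 0 < t i) (hv : ∀ i, 1 < v i)
    (hXdec : limsup (fun x => jtail X S (fun i => v i * t i) x / jtail X S t x) atTop < 1)
    {a : ℝ → ℝ} (ha : Tendsto (fun x => a x / x) atTop (𝓝 0))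
    (hYa : (fun x => rtail Y (a x)) =o[atTop] fun x => jtail (fun i ω => Y ω * X i ω) S t x) :
    limsup (fun x => jtail (fun i ω => Y ω * X i ω) S (fun i => v i * t i) x /
      jtail (fun i ω => Y ω * X i ω) S t x) atTop < 1 := by
  have hvt : ∀ x ≥ 0, ∀ i ∈ S, t i * x ≤ v i * t i * x := fun x hx i _ =>
    mul_le_mul_of_nonneg_right (le_mul_of_one_le_left (ht i).le (hv i).le) hx
  obtain ⟨u, hu0, hu1, hXu⟩ := exists_eventually_le_mul_of_limsup_div_lt one_pos
    (fun _ => ENNReal.toReal_nonneg)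
    ((eventually_ge_atTop 0).mono fun x hx => jtail_anti X S (hvt x hx)) hXdec
  obtain ⟨x₀, hx₀⟩ := eventually_atTop.mp hXu
  have hbound : ∀ᶠ x in atTop, jtail (fun i ω => Y ω * X i ω) S (fun i => v i * t i) x ≤
      u * jtail (fun i ω => Y ω * X i ω) S t x + rtail Y (a x) := by
    filter_upwards [eventually_gt_atTop 0,
      eventually_mul_le_of_tendsto_div_zero ha (le_max_right x₀ 0)] with x hx hax
    exact jtail_mul_le hX hY hXY hY0 hS (fun i _ => mul_pos ((zero_lt_one).trans (hv i)) (ht i))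
      hu0 (le_max_right x₀ 0) (fun z hz => hx₀ z ((le_max_left _ _).trans hz)) hx hax
  exact (limsup_div_le_of_le_mul_add_isLittleO hu0 (fun _ => ENNReal.toReal_nonneg)
    (fun _ => ENNReal.toReal_nonneg) hbound hYa).trans_lt hu1

theorem stmt16_general {Ω : Type*} [MeasureSpace Ω] [IsProbabilityMeasure (ℙ : Measure Ω)]
    {n : ℕ} (X : Fin n → Ω → ℝ) (Y : Ω → ℝ)
    (hXm : ∀ i, Measurable (X i)) (hYm : Measurable Y)
    (hid : ∀ i j : Fin n, ∀ x : ℝ, ℙ {ω | x < X i ω} = ℙ {ω | x < X j ω})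
    (hindep : IndepFun (fun ω i => X i ω) Y ℙ)
    (hGneg : ℙ {ω | Y ω < 0} = 0) (hG0 : ℙ {ω | Y ω ≤ 0} < 1)
    (F0 : ℝ → ℝ) (hF0pos : ∀ x, 0 < F0 x) (hF0 : PosDec F0)
    (hkern : ∀ i, ∃ c : ℝ, 0 < c ∧
      Tendsto (fun x => rtail (X i) x / F0 x) atTop (𝓝 c))
    (hjointPD : ∀ S : Finset (Fin n), S.Nonempty → ∀ t v : Fin n → ℝ,
      (∀ i, 0 < t i) → (∀ i, 1 < v i) →
      limsup (fun x => jtail X S (fun i => v i * t i) x / jtail X S t x) atTop < 1)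
    (a : ℝ → ℝ)
    (ha2 : Tendsto (fun x => a x / x) atTop (𝓝 0))
    (ha3 : ∀ S : Finset (Fin n), S.Nonempty → ∀ t : Fin n → ℝ, (∀ i, 0 < t i) →
      (fun x => rtail Y (a x)) =o[atTop]
        fun x => jtail (fun i ω => Y ω * X i ω) S t x) :
    (∃ H0 : ℝ → ℝ, (∀ x, 0 < H0 x) ∧ PosDec H0 ∧
      ∀ i, ∃ c : ℝ, 0 < c ∧
        Tendsto (fun x => rtail (fun ω => Y ω * X i ω) x / H0 x) atTop (𝓝 c)) ∧
    ∀ S : Finset (Fin n), S.Nonempty → ∀ t v : Fin n → ℝ,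
      (∀ i, 0 < t i) → (∀ i, 1 < v i) →
      limsup (fun x => jtail (fun i ω => Y ω * X i ω) S (fun i => v i * t i) x /
        jtail (fun i ω => Y ω * X i ω) S t x) atTop < 1 := by
  have hjoint := fun (S : Finset (Fin n)) hS t v ht hv =>
    limsup_jtail_mul_div_lt_one hXm hYm hindep hGneg hS ht hv (hjointPD S hS t v ht hv) ha2
      (ha3 S hS t ht)
  refine ⟨?_, hjoint⟩
  rcases n.eq_zero_or_pos with rfl | hn
  · exact ⟨F0, hF0pos, hF0, fun i => i.elim0⟩
  let i₀ : Fin n := ⟨0, hn⟩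
  have hind : ∀ i, IndepFun (X i) Y ℙ := fun i => hindep.comp (measurable_pi_apply i) measurable_id
  obtain ⟨c, hc, hc₀⟩ := hkern i₀
  have hpos := rtail_mul_pos hYm (hind i₀) hG0 (rtail_pos_of_tendsto hc hc₀)
  refine ⟨rtail (fun ω => Y ω * X i₀ ω), hpos, fun w hw => ?_, fun i => ⟨1, one_pos, ?_⟩⟩
  · simpa [jtail_singleton] using hjoint {i₀} (Finset.singleton_nonempty _) (fun _ => 1)
      (fun _ => w) (fun _ => one_pos) (fun _ => hw)
  · have hident := identDistrib_of_forall_measure_lt_eq (hXm i) (hXm i₀) (hid i i₀)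
    simp_rw [rtail_mul_eq_of_identDistrib hYm hident (hind i) (hind i₀), div_self (hpos _).ne']
    exact tendsto_const_nhds

/-- closure of `𝒫𝒟ₙ` under independent scalar product, for a vector with
identically distributed components, under the multivariate truncation condition. -/
theorem stmt16 {Ω : Type*} [MeasureSpace Ω] [IsProbabilityMeasure (ℙ : Measure Ω)]
    {n : ℕ} (X : Fin n → Ω → ℝ) (Y : Ω → ℝ)
    (hXm : ∀ i, Measurable (X i)) (hYm : Measurable Y)
    (hid : ∀ i j : Fin n, ∀ x : ℝ, ℙ {ω | x < X i ω} = ℙ {ω | x < X j ω})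
    (hindep : IndepFun (fun ω i => X i ω) Y ℙ)
    (hGneg : ℙ {ω | Y ω < 0} = 0) (hG0 : ℙ {ω | Y ω ≤ 0} < 1)
    (F0 : ℝ → ℝ) (hF0pos : ∀ x, 0 < F0 x) (hF0 : PosDec F0)
    (hkern : ∀ i, ∃ c : ℝ, 0 < c ∧
      Tendsto (fun x => rtail (X i) x / F0 x) atTop (𝓝 c))
    (hjointPD : ∀ S : Finset (Fin n), S.Nonempty → ∀ t v : Fin n → ℝ,
      (∀ i, 0 < t i) → (∀ i, 1 < v i) →
      limsup (fun x => jtail X S (fun i => v i * t i) x / jtail X S t x) atTop < 1)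
    (a : ℝ → ℝ) (ha1 : Tendsto a atTop atTop)
    (ha2 : Tendsto (fun x => a x / x) atTop (𝓝 0))
    (ha3 : ∀ S : Finset (Fin n), S.Nonempty → ∀ t : Fin n → ℝ, (∀ i, 0 < t i) →
      (fun x => rtail Y (a x)) =o[atTop]
        fun x => jtail (fun i ω => Y ω * X i ω) S t x) :
    (∃ H0 : ℝ → ℝ, (∀ x, 0 < H0 x) ∧ PosDec H0 ∧
      ∀ i, ∃ c : ℝ, 0 < c ∧
        Tendsto (fun x => rtail (fun ω => Y ω * X i ω) x / H0 x) atTop (𝓝 c)) ∧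
    ∀ S : Finset (Fin n), S.Nonempty → ∀ t v : Fin n → ℝ,
      (∀ i, 0 < t i) → (∀ i, 1 < v i) →
      limsup (fun x => jtail (fun i ω => Y ω * X i ω) S (fun i => v i * t i) x /
        jtail (fun i ω => Y ω * X i ω) S t x) atTop < 1 :=
  stmt16_general X Y hXm hYm hid hindep hGneg hG0 F0 hF0pos hF0 hkern hjointPD a ha2 ha3
end
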